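/- Let p be a prime and let δ₂, δ₄, δ₅ ∈ (0, 1). For ℓ ∈ (ℤ/pℤ)^×, let L(ℓ) ∈ {0, 1, …, p−1} denote the least nonnegative residue of ℓ^{−2} mod p. Then #{ ℓ ∈ (ℤ/pℤ)^× : there exist integers h, a, b with 1 ≤ h ≤ p^{δ₅}, 1 ≤ b ≤ p^{δ₂}, and |h·L(ℓ)/p − a/b| < 1/(b p^{δ₄}) } ≤ 8 p^{1 + δ₂ + δ₅ − δ₄}. -/

import Mathlib

/-!
For an exceptional `ℓ` with witnesses `h, a, b`, the integer `μ = b h L(ℓ) - a p` satisfies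
`μ ≡ b h ℓ⁻² (mod p)` and `|μ| < p^{1-δ₄}`, and `μ ≠ 0` because `b, h < p`. As `b h` is a unit
mod `p`, the triple `(h, b, μ)` determines `ℓ⁻²`, hence `ℓ` up to sign, so there are at most
`2 · p^{δ₅} · p^{δ₂} · 2 p^{1-δ₄}` exceptional `ℓ`.
-/

open Finset

theorem abs_mul_sub_mul_lt_of_abs_div_sub_div_lt {x a b p q : ℝ} (hb : 0 < b) (hp : 0 < p)
    (h : |x / p - a / b| < 1 / (b * q)) : |b * x - a * p| < p / q := by
  rw [div_sub_div _ _ hp.ne' hb.ne', abs_div, abs_of_pos (by positivity : 0 < p * b),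
    div_lt_iff₀ (by positivity)] at h
  calc |b * x - a * p| = |x * b - p * a| := by ring_nf
    _ < 1 / (b * q) * (p * b) := h
    _ = p / q := by field_simp

theorem ZMod.intCast_ne_zero_of_pos_of_lt {p : ℕ} {b : ℤ} (hb : 0 < b) (hbp : b < p) :
    (b : ZMod p) ≠ 0 := by
  rw [Ne, ZMod.intCast_zmod_eq_zero_iff_dvd]
  exact fun hdvd => (Int.le_of_dvd hb hdvd).not_gt hbp

theorem ZMod.intCast_ne_zero_of_mem_Icc_floor_rpow {p : ℕ} (hp : 1 < p) {δ : ℝ} (hδ : δ < 1)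
    {b : ℤ} (hb : b ∈ Icc 1 ⌊(p : ℝ) ^ δ⌋) : (b : ZMod p) ≠ 0 := by
  rw [mem_Icc, Int.le_floor] at hb
  refine ZMod.intCast_ne_zero_of_pos_of_lt hb.1 ?_
  exact_mod_cast hb.2.trans_lt (Real.rpow_lt_self_of_one_lt (by exact_mod_cast hp) hδ)

namespace Units

variable {R : Type*} [CommRing R] [IsDomain R]

theorem eq_or_eq_neg_of_mul_inv_sq_eq {c : R} (hc : c ≠ 0) {a b : Rˣ}
    (h : c * ((a⁻¹ : Rˣ) : R) ^ 2 = c * ((b⁻¹ : Rˣ) : R) ^ 2) : a = b ∨ a = -b := by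
  rcases sq_eq_sq_iff_eq_or_eq_neg.mp (mul_left_cancel₀ hc h) with hab | hab
  · exact Or.inl (inv_injective (Units.ext hab))
  · exact Or.inr (inv_injective (Units.ext (by simpa using hab)))

theorem card_filter_eq_mul_inv_sq_le_two [Fintype Rˣ] [DecidableEq R] {c : R} (hc : c ≠ 0)
    (m : R) : #{ℓ : Rˣ | m = c * ((ℓ⁻¹ : Rˣ) : R) ^ 2} ≤ 2 := by
  classical
  rcases eq_empty_or_nonempty {ℓ : Rˣ | m = c * ((ℓ⁻¹ : Rˣ) : R) ^ 2} with he | ⟨ℓ₀, hℓ₀⟩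
  · simp [he]
  refine (card_le_card fun ℓ hℓ => ?_).trans (card_le_two (a := ℓ₀) (b := -ℓ₀))
  rw [mem_filter] at hℓ hℓ₀
  simpa using eq_or_eq_neg_of_mul_inv_sq_eq hc (hℓ.2.symm.trans hℓ₀.2)

end Units

theorem exists_small_intCast_eq_mul_of_abs_sub_lt {p : ℕ} [NeZero p] (x : ZMod p) {h a b : ℤ}
    (hb : 0 < b) {δ : ℝ}
    (happ : |(h : ℝ) * (x.val : ℝ) / p - (a : ℝ) / (b : ℝ)| < 1 / ((b : ℝ) * (p : ℝ) ^ δ)) :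
    ∃ μ : ℤ, |(μ : ℝ)| < (p : ℝ) ^ (1 - δ) ∧ (μ : ZMod p) = b * h * x := by
  have hp : (0 : ℝ) < p := by exact_mod_cast (NeZero.pos p)
  refine ⟨b * (h * x.val) - a * p, ?_, by simp [mul_assoc]⟩
  rw [Real.rpow_sub hp, Real.rpow_one]
  exact_mod_cast abs_mul_sub_mul_lt_of_abs_div_sub_div_lt (by exact_mod_cast hb) hp happ

theorem Int.card_Icc_one_floor_le {x : ℝ} (hx : 0 ≤ x) : (#(Icc 1 ⌊x⌋) : ℝ) ≤ x := by
  rw [Int.card_Icc, add_sub_cancel_right, Int.floor_toNat]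
  exact Nat.floor_le hx

theorem Int.card_Icc_neg_floor_floor_erase_zero_le {x : ℝ} (hx : 0 ≤ x) :
    (#((Icc (-⌊x⌋) ⌊x⌋).erase 0) : ℝ) ≤ 2 * x := by
  have h0 : 0 ≤ ⌊x⌋ := Int.floor_nonneg.mpr hx
  have hcard : (⌊x⌋ + 1 - -⌊x⌋).toNat - 1 = 2 * ⌊x⌋₊ := by rw [← Int.floor_toNat]; omega
  rw [card_erase_of_mem (by simpa using h0), Int.card_Icc, hcard]
  push_cast
  linarith [Nat.floor_le hx]

noncomputable def smallTriples (p : ℕ) (δ₂ δ₄ δ₅ : ℝ) : Finset (ℤ × ℤ × ℤ) :=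
  Icc 1 ⌊(p : ℝ) ^ δ₅⌋ ×ˢ Icc 1 ⌊(p : ℝ) ^ δ₂⌋ ×ˢ
    (Icc (-⌊(p : ℝ) ^ (1 - δ₄)⌋) ⌊(p : ℝ) ^ (1 - δ₄)⌋).erase 0

theorem card_smallTriples_le (p : ℕ) (δ₂ δ₄ δ₅ : ℝ) :
    (#(smallTriples p δ₂ δ₄ δ₅) : ℝ) ≤ 2 * (p : ℝ) ^ δ₅ * (p : ℝ) ^ δ₂ * (p : ℝ) ^ (1 - δ₄) := by
  simp only [smallTriples, card_product, Nat.cast_mul]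
  have := Int.card_Icc_neg_floor_floor_erase_zero_le (x := (p : ℝ) ^ (1 - δ₄)) (by positivity)
  calc _ ≤ (p : ℝ) ^ δ₅ * ((p : ℝ) ^ δ₂ * (2 * (p : ℝ) ^ (1 - δ₄))) := by
        gcongr <;> exact Int.card_Icc_one_floor_le (by positivity)
    _ = _ := by ring

section Prime

variable {p : ℕ} [Fact p.Prime] {δ₂ δ₄ δ₅ : ℝ}

theorem mul_ne_zero_of_mem_smallTriples (hδ₂ : δ₂ < 1) (hδ₅ : δ₅ < 1) {t : ℤ × ℤ × ℤ}
    (ht : t ∈ smallTriples p δ₂ δ₄ δ₅) : (t.2.1 : ZMod p) * t.1 ≠ 0 := by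
  have hp := (Fact.out : p.Prime).one_lt
  obtain ⟨hh, hbμ⟩ := mem_product.mp ht
  exact mul_ne_zero (ZMod.intCast_ne_zero_of_mem_Icc_floor_rpow hp hδ₂ (mem_product.mp hbμ).1)
    (ZMod.intCast_ne_zero_of_mem_Icc_floor_rpow hp hδ₅ hh)

theorem exists_mem_smallTriples_of_abs_sub_lt (hδ₂ : δ₂ < 1) (hδ₅ : δ₅ < 1) (ℓ : (ZMod p)ˣ)
    {h a b : ℤ} (hh : 1 ≤ h) (hhδ : (h : ℝ) ≤ (p : ℝ) ^ δ₅) (hb : 1 ≤ b)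
    (hbδ : (b : ℝ) ≤ (p : ℝ) ^ δ₂)
    (happ : |(h : ℝ) * (((((ℓ⁻¹ : (ZMod p)ˣ) : ZMod p)) ^ 2).val : ℝ) / p - (a : ℝ) / (b : ℝ)|
      < 1 / ((b : ℝ) * (p : ℝ) ^ δ₄)) :
    ∃ t ∈ smallTriples p δ₂ δ₄ δ₅,
      (t.2.2 : ZMod p) = t.2.1 * t.1 * ((ℓ⁻¹ : (ZMod p)ˣ) : ZMod p) ^ 2 := by
  have hp := (Fact.out : p.Prime).one_lt
  obtain ⟨μ, hμ, hμℓ⟩ := exists_small_intCast_eq_mul_of_abs_sub_lt _ hb happ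
  have hh' : h ∈ Icc 1 ⌊(p : ℝ) ^ δ₅⌋ := mem_Icc.mpr ⟨hh, Int.le_floor.mpr hhδ⟩
  have hb' : b ∈ Icc 1 ⌊(p : ℝ) ^ δ₂⌋ := mem_Icc.mpr ⟨hb, Int.le_floor.mpr hbδ⟩
  have hμ0 : μ ≠ 0 := by
    rintro rfl
    rw [Int.cast_zero] at hμℓ
    exact mul_ne_zero (mul_ne_zero (ZMod.intCast_ne_zero_of_mem_Icc_floor_rpow hp hδ₂ hb')
      (ZMod.intCast_ne_zero_of_mem_Icc_floor_rpow hp hδ₅ hh')) (pow_ne_zero 2 (ℓ⁻¹).ne_zero)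
      hμℓ.symm
  have hμ' := abs_le.mp (Int.le_floor.mpr (by exact_mod_cast hμ.le) : |μ| ≤ _)
  exact ⟨(h, b, μ), mem_product.mpr ⟨hh', mem_product.mpr ⟨hb', mem_erase.mpr ⟨hμ0,
    mem_Icc.mpr hμ'⟩⟩⟩, hμℓ⟩

end Prime

theorem stmt13 (p : ℕ) [Fact p.Prime] (δ₂ δ₄ δ₅ : ℝ)
    (h₂ : δ₂ ∈ Set.Ioo (0 : ℝ) 1)
    (h₅ : δ₅ ∈ Set.Ioo (0 : ℝ) 1) :
    (Set.ncard {ℓ : (ZMod p)ˣ | ∃ h a b : ℤ,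
        1 ≤ h ∧ (h : ℝ) ≤ (p : ℝ) ^ δ₅ ∧ 1 ≤ b ∧ (b : ℝ) ≤ (p : ℝ) ^ δ₂ ∧
        |(h : ℝ) * (((((ℓ⁻¹ : (ZMod p)ˣ) : ZMod p))^2).val : ℝ) / p - (a : ℝ) / (b : ℝ)|
          < 1 / ((b : ℝ) * (p : ℝ) ^ δ₄)} : ℝ)
      ≤ 8 * (p : ℝ) ^ ((1 : ℝ) + δ₂ + δ₅ - δ₄) := by
  have hp0 : (0 : ℝ) < p := by exact_mod_cast (Fact.out : p.Prime).pos
  calc _ ≤ ((#((smallTriples p δ₂ δ₄ δ₅).biUnion fun t => {ℓ : (ZMod p)ˣ |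
          (t.2.2 : ZMod p) = t.2.1 * t.1 * ((ℓ⁻¹ : (ZMod p)ˣ) : ZMod p) ^ 2}) : ℕ) : ℝ) := by
        rw [← Set.ncard_coe_finset]
        refine Nat.cast_le.mpr (Set.ncard_le_ncard ?_)
        rintro ℓ ⟨h, a, b, hh, hhδ, hb, hbδ, happ⟩
        obtain ⟨t, ht, hℓ⟩ := exists_mem_smallTriples_of_abs_sub_lt h₂.2 h₅.2 ℓ hh hhδ hb hbδ happ
        exact mem_biUnion.mpr ⟨t, ht, mem_filter.mpr ⟨mem_univ ℓ, hℓ⟩⟩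
    _ ≤ ((#(smallTriples p δ₂ δ₄ δ₅) * 2 : ℕ) : ℝ) := by
        rw [← smul_eq_mul, ← sum_const]
        refine Nat.cast_le.mpr (card_biUnion_le.trans (sum_le_sum fun t ht => ?_))
        exact Units.card_filter_eq_mul_inv_sq_le_two
          (mul_ne_zero_of_mem_smallTriples h₂.2 h₅.2 ht) _
    _ ≤ 2 * (p : ℝ) ^ δ₅ * (p : ℝ) ^ δ₂ * (p : ℝ) ^ (1 - δ₄) * 2 := by
        push_cast
        gcongr
        exact card_smallTriples_le p δ₂ δ₄ δ₅
    _ = 4 * (p : ℝ) ^ ((1 : ℝ) + δ₂ + δ₅ - δ₄) := by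
        rw [show (1 : ℝ) + δ₂ + δ₅ - δ₄ = δ₅ + δ₂ + (1 - δ₄) by ring, Real.rpow_add hp0,
          Real.rpow_add hp0]
        ring
    _ ≤ 8 * (p : ℝ) ^ ((1 : ℝ) + δ₂ + δ₅ - δ₄) := by
        linarith [Real.rpow_nonneg hp0.le ((1 : ℝ) + δ₂ + δ₅ - δ₄)]
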